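/- Fix b > 0 and x̂ ∈ ℝ. Suppose h : ℝ → ℝ is a locally integrable function satisfying, for all real numbers a₁ ≤ a₂, the identity ∫_{x̂}^{∞} L(x; a₁, b) dx + ∫_{a₁}^{a₂} h(a) da + ∫_{−∞}^{x̂} L(x; a₂, b) dx = 1. Then h(a) = L̃(a; x̂, b) for almost every a ∈ ℝ (with respect to Lebesgue measure); that is, h equals the confidence density everywhere except possibly on a set of measure zero. -/

import Mathlib

open MeasureTheory

/-- The Laplace probability density `L(x; a, b) = (1/(2b)) * exp (-|x - a| / b)`. -/
noncomputable def laplaceDensity (x a b : ℝ) : ℝ :=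
  (1 / (2 * b)) * Real.exp (-|x - a| / b)

/-- The confidence density of the location parameter `a` given observation `x̂`. -/
noncomputable def laplaceConfidenceDensity (a xhat b : ℝ) : ℝ :=
  (1 / (2 * b)) * Real.exp (-|xhat - a| / b)

/-!
Both densities are translates of the centred density `f = L(·; 0, b)`: `L(x; a, b) = f (x - a)`
and `L̃(a; x̂, b) = f (x̂ - a)`. With `F a = ∫_{-∞}^{x̂} L(x; a, b) dx = ∫_{-∞}^{x̂ - a} f`, the
substitution `t = x̂ - a` gives `∫_{a₁}^{a₂} L̃ = F a₁ - F a₂`. The identity at `a₁ = a₂` says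
that the first integral is `1 - F a₁`, so in general `∫_{a₁}^{a₂} h = F a₁ - F a₂` as well. Two
locally integrable functions with the same interval integrals agree almost everywhere, by the
Lebesgue differentiation theorem.
-/

open Set intervalIntegral

theorem ae_eq_of_forall_intervalIntegral_eq {E : Type*} [NormedAddCommGroup E]
    [NormedSpace ℝ E] [CompleteSpace E] {f g : ℝ → E}
    (hf : LocallyIntegrable f volume) (hg : LocallyIntegrable g volume)
    (hfg : ∀ a₁ a₂ : ℝ, a₁ ≤ a₂ → ∫ x in a₁..a₂, f x = ∫ x in a₁..a₂, g x) :
    f =ᵐ[volume] g := by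
  have hprimitive : (fun x => ∫ t in 0..x, f t) = fun x => ∫ t in 0..x, g t := by
    funext x
    rcases le_total 0 x with hx | hx
    · exact hfg 0 x hx
    · rw [integral_symm, hfg x 0 hx, ← integral_symm]
  filter_upwards [LocallyIntegrable.ae_hasDerivAt_integral hf,
    LocallyIntegrable.ae_hasDerivAt_integral hg] with x hfx hgx
  exact (hfx 0).unique (hprimitive ▸ hgx 0)

theorem integral_Iic_comp_sub_right {E : Type*} [NormedAddCommGroup E] [NormedSpace ℝ E]
    (f : ℝ → E) (c d : ℝ) : ∫ x in Iic c, f (x - d) = ∫ x in Iic (c - d), f x := by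
  have := (measurePreserving_sub_right volume d).setIntegral_preimage_emb
    (measurableEmbedding_subRight d) f (Iic (c - d))
  rwa [preimage_sub_const_Iic, sub_add_cancel] at this

theorem laplaceDensity_eq_laplaceDensity_sub (x a b : ℝ) :
    laplaceDensity x a b = laplaceDensity (x - a) 0 b := by
  simp [laplaceDensity]

theorem laplaceConfidenceDensity_eq_laplaceDensity (a xhat b : ℝ) :
    laplaceConfidenceDensity a xhat b = laplaceDensity (xhat - a) 0 b := by
  simp [laplaceConfidenceDensity, laplaceDensity]

theorem continuous_laplaceConfidenceDensity (xhat b : ℝ) :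
    Continuous fun a => laplaceConfidenceDensity a xhat b := by
  unfold laplaceConfidenceDensity
  fun_prop

theorem integrable_laplaceDensity {b : ℝ} (hb : 0 < b) (a : ℝ) :
    Integrable fun x => laplaceDensity x a b := by
  suffices Integrable fun x => Real.exp (-|x| / b) by
    simpa [laplaceDensity_eq_laplaceDensity_sub _ a b, laplaceDensity] using
      (this.comp_sub_right a).const_mul (1 / (2 * b))
  rw [← integrableOn_univ, ← Iic_union_Ioi (a := 0)]
  refine .union ((integrableOn_exp_mul_Iic (inv_pos.2 hb) 0).congr_fun (fun x hx => ?_)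
    measurableSet_Iic) ((integrableOn_exp_mul_Ioi (neg_lt_zero.2 (inv_pos.2 hb)) 0).congr_fun
    (fun x hx => ?_) measurableSet_Ioi)
  · rw [abs_of_nonpos hx]
    ring_nf
  · rw [abs_of_pos hx]
    ring_nf

theorem intervalIntegral_laplaceConfidenceDensity {b : ℝ} (hb : 0 < b) (xhat a₁ a₂ : ℝ) :
    ∫ a in a₁..a₂, laplaceConfidenceDensity a xhat b =
      (∫ x in Iic xhat, laplaceDensity x a₁ b) - ∫ x in Iic xhat, laplaceDensity x a₂ b := by
  have hcdf (a : ℝ) : ∫ x in Iic xhat, laplaceDensity x a b =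
      ∫ t in Iic (xhat - a), laplaceDensity t 0 b := by
    simp only [laplaceDensity_eq_laplaceDensity_sub _ a]
    exact integral_Iic_comp_sub_right (laplaceDensity · 0 b) xhat a
  have hint (c : ℝ) : IntegrableOn (laplaceDensity · 0 b) (Iic c) :=
    (integrable_laplaceDensity hb 0).integrableOn
  simp only [laplaceConfidenceDensity_eq_laplaceDensity, hcdf]
  rw [integral_comp_sub_left (laplaceDensity · 0 b)]
  exact (integral_Iic_sub_Iic (hint _) (hint _)).symm

/-- A locally integrable function satisfying the interval identity coincides
with the confidence density almost everywhere (w.r.t. Lebesgue measure). -/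
theorem laplace_confidence_density_unique_ae
    (b : ℝ) (hb : 0 < b) (xhat : ℝ) (h : ℝ → ℝ)
    (hloc : LocallyIntegrable h volume)
    (hid : ∀ a₁ a₂ : ℝ, a₁ ≤ a₂ →
      (∫ x in Set.Ioi xhat, laplaceDensity x a₁ b) +
        (∫ a in a₁..a₂, h a) +
          (∫ x in Set.Iic xhat, laplaceDensity x a₂ b) = 1) :
    ∀ᵐ a : ℝ, h a = laplaceConfidenceDensity a xhat b := by
  refine ae_eq_of_forall_intervalIntegral_eq hloc
    (continuous_laplaceConfidenceDensity xhat b).locallyIntegrable fun a₁ a₂ h12 => ?_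
  rw [intervalIntegral_laplaceConfidenceDensity hb]
  linarith [hid a₁ a₂ h12, hid a₁ a₁ le_rfl, integral_same (μ := volume) (f := h) (a := a₁)]
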